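/- arXiv:2506.11203 — 8 statements merged into one kernel-verified Lean document; each statement's English description precedes it below -/
import Mathlib

section
/- Let λ₁, λ₂ : ℝ → ℝ be twice differentiable functions with λ₁(Z) > 0 and λ₂(Z) > 0 for all Z, satisfying for all Z the three equations: λ₁′(Z) λ₂′(Z) + λ₂(Z) λ₁″(Z) = 0, λ₁′(Z) λ₂′(Z) + λ₁(Z) λ₂″(Z) = 0, and λ₂(Z) λ₁″(Z) + λ₁(Z) λ₂″(Z) = 0. Then λ₁″ ≡ 0 and λ₂″ ≡ 0, and there exist constants a₀, a₁, b₀, b₁ with a₁ b₁ = 0 such that λ₁(Z) = a₀ + a₁ Z and λ₂(Z) = b₀ + b₁ Z for all Z; in particular at least one of λ₁, λ₂ is constant. -/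
/-- Compatibility (vanishing Ricci curvature) of the diagonal strain
`C = diag(λ₁²(Z), λ₂²(Z), 1)` forces `λ₁″ ≡ 0`, `λ₂″ ≡ 0`, and both stretches to be
affine with at least one of them constant. -/
theorem diagonal_strain_compatibility
    (l1 l2 : ℝ → ℝ)
    (hl1 : Differentiable ℝ l1) (hl1' : Differentiable ℝ (deriv l1))
    (hl2 : Differentiable ℝ l2) (hl2' : Differentiable ℝ (deriv l2))
    (hpos1 : ∀ Z, 0 < l1 Z) (hpos2 : ∀ Z, 0 < l2 Z)
    (e1 : ∀ Z, deriv l1 Z * deriv l2 Z + l2 Z * deriv (deriv l1) Z = 0)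
    (e2 : ∀ Z, deriv l1 Z * deriv l2 Z + l1 Z * deriv (deriv l2) Z = 0)
    (e3 : ∀ Z, l2 Z * deriv (deriv l1) Z + l1 Z * deriv (deriv l2) Z = 0) :
    (∀ Z, deriv (deriv l1) Z = 0) ∧ (∀ Z, deriv (deriv l2) Z = 0) ∧
      ∃ a₀ a₁ b₀ b₁ : ℝ, a₁ * b₁ = 0 ∧
        (∀ Z, l1 Z = a₀ + a₁ * Z) ∧ (∀ Z, l2 Z = b₀ + b₁ * Z) := by
  have hprod : ∀ Z, deriv l1 Z * deriv l2 Z = 0 := by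
    intro Z; have := e1 Z; have := e2 Z; have := e3 Z; linarith
  have h1'' : ∀ Z, deriv (deriv l1) Z = 0 := by
    intro Z
    have h := e1 Z
    rw [hprod Z, zero_add] at h
    exact (mul_eq_zero.mp h).resolve_left (ne_of_gt (hpos2 Z))
  have h2'' : ∀ Z, deriv (deriv l2) Z = 0 := by
    intro Z
    have h := e2 Z
    rw [hprod Z, zero_add] at h
    exact (mul_eq_zero.mp h).resolve_left (ne_of_gt (hpos1 Z))
  refine ⟨h1'', h2'', l1 0, deriv l1 0, l2 0, deriv l2 0, hprod 0, ?_, ?_⟩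
  · intro Z
    have hc : ∀ x, deriv l1 x = deriv l1 0 :=
      fun x => is_const_of_deriv_eq_zero hl1' h1'' x 0
    have hg : ∀ x y, (fun t => l1 t - deriv l1 0 * t) x
        = (fun t => l1 t - deriv l1 0 * t) y := by
      apply is_const_of_deriv_eq_zero
      · exact hl1.sub (differentiable_const _ |>.mul differentiable_id)
      · intro x
        have hd : HasDerivAt (fun t => l1 t - deriv l1 0 * t)
            (deriv l1 x - deriv l1 0 * 1) x :=
          ((hl1.differentiableAt).hasDerivAt).sub ((hasDerivAt_id x).const_mul _)
        rw [hd.deriv, hc x]; ring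
    have := hg Z 0
    simp at this
    linarith
  · intro Z
    have hc : ∀ x, deriv l2 x = deriv l2 0 :=
      fun x => is_const_of_deriv_eq_zero hl2' h2'' x 0
    have hg : ∀ x y, (fun t => l2 t - deriv l2 0 * t) x
        = (fun t => l2 t - deriv l2 0 * t) y := by
      apply is_const_of_deriv_eq_zero
      · exact hl2.sub (differentiable_const _ |>.mul differentiable_id)
      · intro x
        have hd : HasDerivAt (fun t => l2 t - deriv l2 0 * t)
            (deriv l2 x - deriv l2 0 * 1) x :=
          ((hl2.differentiableAt).hasDerivAt).sub ((hasDerivAt_id x).const_mul _)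
        rw [hd.deriv, hc x]; ring
    have := hg Z 0
    simp at this
    linarith
end

section
/- Let J ⊆ ℝ be a nonempty open interval and let ψ, ξ, η : J → ℝ be differentiable functions satisfying on J the five equations: ψ² − ξ η = 0, 2 η ψ − ψ′ = 0, ψ′ + 2 ψ η = 0, ψ² − η² − η′ = 0, and ψ² − ξ′ − ξ² = 0. Then ψ ≡ 0 on J, ξ η ≡ 0 on J, and ξ′ = −ξ², η′ = −η² on J. -/
/-- The vanishing of the curvature 2-forms for the coframe
`ϑ¹ = a dX, ϑ² = b dX + c dY, ϑ³ = dZ` gives five ODEs for `ψ, ξ, η` on an open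
interval `J = (A, B)`; they force `ψ ≡ 0`, `ξ η ≡ 0`, `ξ′ = −ξ²` and `η′ = −η²`. -/
theorem moving_frame_curvature_equations
    (A B : ℝ) (hAB : A < B) (ψ ξ η : ℝ → ℝ)
    (hψ : ∀ z ∈ Set.Ioo A B, DifferentiableAt ℝ ψ z)
    (hξ : ∀ z ∈ Set.Ioo A B, DifferentiableAt ℝ ξ z)
    (hη : ∀ z ∈ Set.Ioo A B, DifferentiableAt ℝ η z)
    (e1 : ∀ z ∈ Set.Ioo A B, ψ z ^ 2 - ξ z * η z = 0)
    (e2 : ∀ z ∈ Set.Ioo A B, 2 * η z * ψ z - deriv ψ z = 0)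
    (e3 : ∀ z ∈ Set.Ioo A B, deriv ψ z + 2 * ψ z * η z = 0)
    (e4 : ∀ z ∈ Set.Ioo A B, ψ z ^ 2 - η z ^ 2 - deriv η z = 0)
    (e5 : ∀ z ∈ Set.Ioo A B, ψ z ^ 2 - deriv ξ z - ξ z ^ 2 = 0) :
    ∀ z ∈ Set.Ioo A B,
      ψ z = 0 ∧ ξ z * η z = 0 ∧ deriv ξ z = -(ξ z ^ 2) ∧ deriv η z = -(η z ^ 2) := by
  intro z hz
  have h1 := e1 z hz
  have h2 := e2 z hz
  have h3 := e3 z hz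
  have h4 := e4 z hz
  have h5 := e5 z hz
  have hψη : ψ z * η z = 0 := by linarith
  have h1' : ψ z ^ 2 = ξ z * η z := by linarith
  have hψ3 : ψ z ^ 3 = 0 := by
    calc ψ z ^ 3 = ψ z ^ 2 * ψ z := by ring
      _ = ξ z * (ψ z * η z) := by rw [h1']; ring
      _ = 0 := by rw [hψη]; ring
  have hψ0 : ψ z = 0 := by
    have := pow_eq_zero_iff (n := 3) (by norm_num) |>.mp hψ3
    exact this
  refine ⟨hψ0, by nlinarith, by nlinarith, by nlinarith⟩
end

section
/- Fix real constants C₁, …, C₈ and define φ : ℝ³ → ℝ³ (Family Z₁) by φ(X, Y, Z) = ((Z + C₄) sin(C₁(X + C₅)) + C₆, C₂ X + C₃ Y + C₇, (Z + C₄) cos(C₁(X + C₅)) + C₈). Then φ is differentiable, and at every point p = (X, Y, Z) its Jacobian matrix F(p) satisfies F(p)ᵀ F(p) = [[C₂² + C₁²(Z + C₄)², C₂ C₃, 0], [C₂ C₃, C₃², 0], [0, 0, 1]]. In particular the right Cauchy–Green strain C = FᵀF depends only on Z, C₁₃ = C₂₃ = 0, and C₃₃ = 1 (the deformation is Z-isometric).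 -/
set_option maxHeartbeats 1000000


open Real Matrix

/-- The Jacobian matrix (deformation gradient) of a map `φ : ℝ³ → ℝ³` at a point `p`:
`F i j = ∂φ_i/∂x_j`. -/
noncomputable def jacobian (φ : (Fin 3 → ℝ) → (Fin 3 → ℝ)) (p : Fin 3 → ℝ) :
    Matrix (Fin 3) (Fin 3) ℝ :=
  Matrix.of fun i j => fderiv ℝ φ p (Pi.single j 1) i

/-- Family `Z₁`: the right Cauchy–Green strain `C = FᵀF` depends only on `Z`, has
vanishing `13` and `23` components, and `C₃₃ = 1` (the deformation is Z-isometric). -/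
theorem familyZ1_right_cauchy_green
    (C₁ C₂ C₃ C₄ C₅ C₆ C₇ C₈ : ℝ)
    (φ : (Fin 3 → ℝ) → (Fin 3 → ℝ))
    (hφ : φ = fun p => ![(p 2 + C₄) * sin (C₁ * (p 0 + C₅)) + C₆,
      C₂ * p 0 + C₃ * p 1 + C₇,
      (p 2 + C₄) * cos (C₁ * (p 0 + C₅)) + C₈]) :
    Differentiable ℝ φ ∧
      ∀ p : Fin 3 → ℝ,
        (jacobian φ p)ᵀ * jacobian φ p =
          !![C₂ ^ 2 + C₁ ^ 2 * (p 2 + C₄) ^ 2, C₂ * C₃, 0;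
             C₂ * C₃, C₃ ^ 2, 0;
             0, 0, 1] := by
  subst hφ
  set pr : Fin 3 → ((Fin 3 → ℝ) →L[ℝ] ℝ) := fun j => ContinuousLinearMap.proj j with hpr
  have key : ∀ p : Fin 3 → ℝ,
      HasFDerivAt (fun p : Fin 3 → ℝ => ![(p 2 + C₄) * sin (C₁ * (p 0 + C₅)) + C₆,
        C₂ * p 0 + C₃ * p 1 + C₇,
        (p 2 + C₄) * cos (C₁ * (p 0 + C₅)) + C₈])
      (ContinuousLinearMap.pi
        ![(p 2 + C₄) • (cos (C₁ * (p 0 + C₅)) • (C₁ • pr 0)) + sin (C₁ * (p 0 + C₅)) • pr 2,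
          C₂ • pr 0 + C₃ • pr 1,
          (p 2 + C₄) • ((-sin (C₁ * (p 0 + C₅))) • (C₁ • pr 0)) + cos (C₁ * (p 0 + C₅)) • pr 2]) p := by
    intro p
    have h0 : HasFDerivAt (fun p : Fin 3 → ℝ => p 0) (pr 0) p := hasFDerivAt_apply 0 p
    have h1 : HasFDerivAt (fun p : Fin 3 → ℝ => p 1) (pr 1) p := hasFDerivAt_apply 1 p
    have h2 : HasFDerivAt (fun p : Fin 3 → ℝ => p 2) (pr 2) p := hasFDerivAt_apply 2 p
    have hs : HasFDerivAt (fun p : Fin 3 → ℝ => C₁ * (p 0 + C₅)) (C₁ • pr 0) p :=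
      (h0.add_const C₅).const_mul C₁
    have hz : HasFDerivAt (fun p : Fin 3 → ℝ => p 2 + C₄) (pr 2) p := h2.add_const C₄
    have hsin : HasFDerivAt (fun p : Fin 3 → ℝ => sin (C₁ * (p 0 + C₅)))
        (cos (C₁ * (p 0 + C₅)) • (C₁ • pr 0)) p := hs.sin
    have hcos : HasFDerivAt (fun p : Fin 3 → ℝ => cos (C₁ * (p 0 + C₅)))
        ((-sin (C₁ * (p 0 + C₅))) • (C₁ • pr 0)) p := hs.cos
    have hf0 : HasFDerivAt (fun p : Fin 3 → ℝ => (p 2 + C₄) * sin (C₁ * (p 0 + C₅)) + C₆)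
        ((p 2 + C₄) • (cos (C₁ * (p 0 + C₅)) • (C₁ • pr 0)) + sin (C₁ * (p 0 + C₅)) • pr 2) p :=
      (hz.mul hsin).add_const C₆
    have hf1 : HasFDerivAt (fun p : Fin 3 → ℝ => C₂ * p 0 + C₃ * p 1 + C₇)
        (C₂ • pr 0 + C₃ • pr 1) p :=
      ((h0.const_mul C₂).add (h1.const_mul C₃)).add_const C₇
    have hf2 : HasFDerivAt (fun p : Fin 3 → ℝ => (p 2 + C₄) * cos (C₁ * (p 0 + C₅)) + C₈)
        ((p 2 + C₄) • ((-sin (C₁ * (p 0 + C₅))) • (C₁ • pr 0)) + cos (C₁ * (p 0 + C₅)) • pr 2) p :=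
      (hz.mul hcos).add_const C₈
    refine hasFDerivAt_pi.2 ?_
    intro i
    fin_cases i
    · exact hf0
    · exact hf1
    · exact hf2
  constructor
  · exact fun p => (key p).differentiableAt
  · intro p
    have hJ : jacobian (fun p => ![(p 2 + C₄) * sin (C₁ * (p 0 + C₅)) + C₆,
        C₂ * p 0 + C₃ * p 1 + C₇,
        (p 2 + C₄) * cos (C₁ * (p 0 + C₅)) + C₈]) p =
        !![(p 2 + C₄) * (C₁ * cos (C₁ * (p 0 + C₅))), 0, sin (C₁ * (p 0 + C₅));
           C₂, C₃, 0;
           (p 2 + C₄) * (-(C₁ * sin (C₁ * (p 0 + C₅)))), 0, cos (C₁ * (p 0 + C₅))] := by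
      ext i j
      rw [jacobian, Matrix.of_apply, (key p).fderiv]
      fin_cases i <;> fin_cases j <;>
        simp [pr, Pi.single_apply, -mul_eq_mul_left_iff] <;> ring
    rw [hJ]
    clear key hJ
    set c := cos (C₁ * (p 0 + C₅)) with hc
    set s := sin (C₁ * (p 0 + C₅)) with hs
    have hT : (!![(p 2 + C₄) * (C₁ * c), 0, s;
           C₂, C₃, 0;
           (p 2 + C₄) * (-(C₁ * s)), 0, c])ᵀ =
        !![(p 2 + C₄) * (C₁ * c), C₂, (p 2 + C₄) * (-(C₁ * s));
           0, C₃, 0;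
           s, 0, c] := by
      ext i j
      fin_cases i <;> fin_cases j <;> rfl
    rw [hT, Matrix.mul_fin_three]
    have hsc : s ^ 2 + c ^ 2 = 1 := sin_sq_add_cos_sq _
    clear_value c s
    ext i j
    fin_cases i <;> fin_cases j <;>
      simp <;>
      first
        | ring1
        | linear_combination (C₁ ^ 2 * (p 2 + C₄) ^ 2) * hsc
        | linear_combination hsc
end

section
/- Fix real constants C₁, …, C₈ and define φ : ℝ³ → ℝ³ (Family Z₂) by φ(X, Y, Z) = ((Z + C₅) sin(C₁ X + C₃ Y + C₄) + C₆, C₂ X + C₇, (Z + C₅) cos(C₁ X + C₃ Y + C₄) + C₈). Then φ is differentiable, and at every point p = (X, Y, Z) its Jacobian matrix F(p) satisfies F(p)ᵀ F(p) = [[C₂² + C₁²(Z + C₅)², C₁ C₃ (Z + C₅)², 0], [C₁ C₃ (Z + C₅)², C₃²(Z + C₅)², 0], [0, 0, 1]]. In particular the right Cauchy–Green strain C = FᵀF depends only on Z, C₁₃ = C₂₃ = 0, and C₃₃ = 1 (the deformation is Z-isometric). -/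
open Real Matrix

set_option maxHeartbeats 1000000 in
/-- Family `Z₂`: the right Cauchy–Green strain `C = FᵀF` depends only on `Z`, has
vanishing `13` and `23` components, and `C₃₃ = 1` (the deformation is Z-isometric). -/
theorem familyZ2_right_cauchy_green
    (C₁ C₂ C₃ C₄ C₅ C₆ C₇ C₈ : ℝ)
    (φ : (Fin 3 → ℝ) → (Fin 3 → ℝ))
    (hφ : φ = fun p => ![(p 2 + C₅) * sin (C₁ * p 0 + C₃ * p 1 + C₄) + C₆,
      C₂ * p 0 + C₇,
      (p 2 + C₅) * cos (C₁ * p 0 + C₃ * p 1 + C₄) + C₈]) :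
    Differentiable ℝ φ ∧
      ∀ p : Fin 3 → ℝ,
        (jacobian φ p)ᵀ * jacobian φ p =
          !![C₂ ^ 2 + C₁ ^ 2 * (p 2 + C₅) ^ 2, C₁ * C₃ * (p 2 + C₅) ^ 2, 0;
             C₁ * C₃ * (p 2 + C₅) ^ 2, C₃ ^ 2 * (p 2 + C₅) ^ 2, 0;
             0, 0, 1] := by
  subst hφ
  set pr : Fin 3 → (Fin 3 → ℝ) →L[ℝ] ℝ :=
    fun i => ContinuousLinearMap.proj (R := ℝ) (φ := fun _ : Fin 3 => ℝ) i with hpr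
  have key : ∀ p : Fin 3 → ℝ,
      HasFDerivAt (fun p : Fin 3 → ℝ =>
        ![(p 2 + C₅) * sin (C₁ * p 0 + C₃ * p 1 + C₄) + C₆,
          C₂ * p 0 + C₇,
          (p 2 + C₅) * cos (C₁ * p 0 + C₃ * p 1 + C₄) + C₈])
        (ContinuousLinearMap.pi
          ![(p 2 + C₅) • (cos (C₁ * p 0 + C₃ * p 1 + C₄) • (C₁ • pr 0 + C₃ • pr 1))
              + sin (C₁ * p 0 + C₃ * p 1 + C₄) • pr 2,
            C₂ • pr 0,
            (p 2 + C₅) • ((-sin (C₁ * p 0 + C₃ * p 1 + C₄)) • (C₁ • pr 0 + C₃ • pr 1))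
              + cos (C₁ * p 0 + C₃ * p 1 + C₄) • pr 2]) p := by
    intro p
    have ha : HasFDerivAt (fun q : Fin 3 → ℝ => C₁ * q 0 + C₃ * q 1 + C₄)
        (C₁ • pr 0 + C₃ • pr 1) p :=
      (((hasFDerivAt_apply 0 p).const_mul C₁).add
        ((hasFDerivAt_apply 1 p).const_mul C₃)).add_const C₄
    have hz : HasFDerivAt (fun q : Fin 3 → ℝ => q 2 + C₅) (pr 2) p :=
      (hasFDerivAt_apply 2 p).add_const C₅
    have hsin : HasFDerivAt (fun q : Fin 3 → ℝ => sin (C₁ * q 0 + C₃ * q 1 + C₄))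
        (cos (C₁ * p 0 + C₃ * p 1 + C₄) • (C₁ • pr 0 + C₃ • pr 1)) p :=
      (Real.hasDerivAt_sin _).comp_hasFDerivAt p ha
    have hcos : HasFDerivAt (fun q : Fin 3 → ℝ => cos (C₁ * q 0 + C₃ * q 1 + C₄))
        ((-sin (C₁ * p 0 + C₃ * p 1 + C₄)) • (C₁ • pr 0 + C₃ • pr 1)) p :=
      (Real.hasDerivAt_cos _).comp_hasFDerivAt p ha
    have h0 := (hz.mul hsin).add_const C₆
    have h1 : HasFDerivAt (fun q : Fin 3 → ℝ => C₂ * q 0 + C₇) (C₂ • pr 0) p :=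
      ((hasFDerivAt_apply (𝕜 := ℝ) 0 p).const_mul C₂).add_const C₇
    have h2 := (hz.mul hcos).add_const C₈
    refine hasFDerivAt_pi.2 ?_
    intro i
    fin_cases i
    · simpa using h0
    · simpa using h1
    · simpa using h2
  constructor
  · exact fun p => (key p).differentiableAt
  · intro p
    have hf : jacobian (fun p : Fin 3 → ℝ =>
        ![(p 2 + C₅) * sin (C₁ * p 0 + C₃ * p 1 + C₄) + C₆,
          C₂ * p 0 + C₇,
          (p 2 + C₅) * cos (C₁ * p 0 + C₃ * p 1 + C₄) + C₈]) p =
        !![(p 2 + C₅) * (cos (C₁ * p 0 + C₃ * p 1 + C₄) * C₁),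
           (p 2 + C₅) * (cos (C₁ * p 0 + C₃ * p 1 + C₄) * C₃),
           sin (C₁ * p 0 + C₃ * p 1 + C₄);
           C₂, 0, 0;
           (p 2 + C₅) * (-sin (C₁ * p 0 + C₃ * p 1 + C₄) * C₁),
           (p 2 + C₅) * (-sin (C₁ * p 0 + C₃ * p 1 + C₄) * C₃),
           cos (C₁ * p 0 + C₃ * p 1 + C₄)] := by
      ext i j
      simp only [jacobian, Matrix.of_apply, (key p).fderiv]
      fin_cases i <;> fin_cases j <;>
        simp [hpr, Pi.single_apply, Matrix.cons_val_zero, Matrix.cons_val_one]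
    rw [hf]
    have hsc := sin_sq_add_cos_sq (C₁ * p 0 + C₃ * p 1 + C₄)
    ext i j
    fin_cases i <;> fin_cases j <;>
      simp [Matrix.mul_apply, Fin.sum_univ_three, Matrix.vecHead, Matrix.vecTail] <;>
      first
        | ring1
        | linear_combination ((p 2 + C₅) ^ 2 * C₁ ^ 2) * hsc
        | linear_combination ((p 2 + C₅) ^ 2 * C₁ * C₃) * hsc
        | linear_combination ((p 2 + C₅) ^ 2 * C₃ ^ 2) * hsc
        | linear_combination hsc
end

section
/- Fix real constants C₁, …, C₈ and define φ : ℝ³ → ℝ³ (Family Z₂) by φ(X, Y, Z) = ((Z + C₅) sin(C₁ X + C₃ Y + C₄) + C₆, C₂ X + C₇, (Z + C₅) cos(C₁ X + C₃ Y + C₄) + C₈). Then at every point p = (X, Y, Z) the determinant of the Jacobian matrix of φ equals −C₂ C₃ (Z + C₅). -/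
open Real Matrix

set_option maxHeartbeats 1600000 in
/-- Family `Z₂`: the Jacobian determinant equals `−C₂ C₃ (Z + C₅)`. -/
theorem familyZ2_jacobian_det
    (C₁ C₂ C₃ C₄ C₅ C₆ C₇ C₈ : ℝ)
    (φ : (Fin 3 → ℝ) → (Fin 3 → ℝ))
    (hφ : φ = fun p => ![(p 2 + C₅) * sin (C₁ * p 0 + C₃ * p 1 + C₄) + C₆,
      C₂ * p 0 + C₇,
      (p 2 + C₅) * cos (C₁ * p 0 + C₃ * p 1 + C₄) + C₈]) :
    ∀ p : Fin 3 → ℝ, (jacobian φ p).det = -(C₂ * C₃ * (p 2 + C₅)) := by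
  intro p
  set pr : Fin 3 → (Fin 3 → ℝ) →L[ℝ] ℝ := fun j => ContinuousLinearMap.proj j with hpr
  have hproj : ∀ j : Fin 3, HasFDerivAt (fun x : Fin 3 → ℝ => x j) (pr j) p := by
    intro j
    exact (pr j).hasFDerivAt (x := p)
  set θ := C₁ * p 0 + C₃ * p 1 + C₄ with hθ
  set u' : (Fin 3 → ℝ) →L[ℝ] ℝ := C₁ • pr 0 + C₃ • pr 1 with hu'
  have hu : HasFDerivAt (fun x : Fin 3 → ℝ => C₁ * x 0 + C₃ * x 1 + C₄) u' p :=
    (((hproj 0).const_mul C₁).add ((hproj 1).const_mul C₃)).add_const C₄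
  have hz : HasFDerivAt (fun x : Fin 3 → ℝ => x 2 + C₅) (pr 2) p :=
    (hproj 2).add_const C₅
  set L0 : (Fin 3 → ℝ) →L[ℝ] ℝ := (p 2 + C₅) • (cos θ • u') + sin θ • pr 2 with hL0
  set L1 : (Fin 3 → ℝ) →L[ℝ] ℝ := C₂ • pr 0 with hL1
  set L2 : (Fin 3 → ℝ) →L[ℝ] ℝ := (p 2 + C₅) • (-sin θ • u') + cos θ • pr 2 with hL2
  have h0 : HasFDerivAt
      (fun x : Fin 3 → ℝ => (x 2 + C₅) * sin (C₁ * x 0 + C₃ * x 1 + C₄) + C₆) L0 p :=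
    (hz.mul hu.sin).add_const C₆
  have h1 : HasFDerivAt (fun x : Fin 3 → ℝ => C₂ * x 0 + C₇) L1 p :=
    ((hproj 0).const_mul C₂).add_const C₇
  have h2 : HasFDerivAt
      (fun x : Fin 3 → ℝ => (x 2 + C₅) * cos (C₁ * x 0 + C₃ * x 1 + C₄) + C₈) L2 p :=
    (hz.mul hu.cos).add_const C₈
  have hL : HasFDerivAt φ (ContinuousLinearMap.pi ![L0, L1, L2]) p := by
    rw [hφ]
    apply hasFDerivAt_pi.2
    intro i
    fin_cases i
    · simpa using h0
    · simpa using h1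
    · simpa using h2
  have hfd : fderiv ℝ φ p = ContinuousLinearMap.pi ![L0, L1, L2] := hL.fderiv
  have hJ : jacobian φ p = Matrix.of fun i j =>
      (![L0, L1, L2] i : (Fin 3 → ℝ) →L[ℝ] ℝ) (Pi.single j 1) := by
    ext i j
    simp [jacobian, hfd]
  rw [hJ, Matrix.det_fin_three]
  have hone : ∀ j : Fin 3, (pr j) (Pi.single j 1) = 1 := by
    intro j; simp [hpr]
  have hzero : ∀ j k : Fin 3, j ≠ k → (pr j) (Pi.single k 1) = 0 := by
    intro j k h; simp [hpr, Pi.single_apply, h.symm]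
  simp [hL0, hL1, hL2, hu', hone, hzero, ContinuousLinearMap.add_apply,
    ContinuousLinearMap.smul_apply]
  linear_combination (-(C₂ * C₃ * (p 2 + C₅))) * sin_sq_add_cos_sq θ
end

section
/- Fix real constants C₁, C₂, C₃, C₄ and define f, g, h : ℝ → ℝ by f(Z) = C₂² + C₁²(Z + C₄)², g(Z) = C₂ C₃, h(Z) = C₃². Then (f, g, h) satisfies, for all Z, the four compatibility equations: (1) 2 f h f″ + f f′ h′ − 2 f (g′)² − 2 g² f″ + 2 g f′ g′ − h (f′)² = 0; (2) 2 h (g′)² − h f′ h′ − 2 g g′ h′ + f (h′)² + 2 g² h″ − 2 f h h″ = 0; (3) h f′ g′ − 2 g f′ h′ + f g′ h′ + 2 g² g″ − 2 f h g″ = 0; (4) − h² (f′)² + 2 f h² f″ + f² (h′)² + 4 f g g′ h′ − 2 g² (f′ h′ + f h″ + (g′)²) − 2 h (g² f″ + g(−2 f′ g′ + 2 f g″) + f((g′)² − f h″)) + 4 g³ g″ = 0. Moreover, if C₂ ≠ 0 or (C₁ ≠ 0 and Z + C₄ ≠ 0), and C₃ ≠ 0, and C₁ C₃ ≠ 0,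 then f(Z) > 0 and f(Z) h(Z) − g(Z)² = C₁² C₃² (Z + C₄)² ≥ 0. -/
lemma deriv_fZ1 (C₁ C₂ C₄ : ℝ) :
    deriv (fun Z : ℝ => C₂ ^ 2 + C₁ ^ 2 * (Z + C₄) ^ 2)
      = fun Z => C₁ ^ 2 * (2 * (Z + C₄)) := by
  funext Z
  have : HasDerivAt (fun Z : ℝ => C₂ ^ 2 + C₁ ^ 2 * (Z + C₄) ^ 2)
      (C₁ ^ 2 * (2 * (Z + C₄))) Z := by
    have h1 : HasDerivAt (fun Z : ℝ => Z + C₄) 1 Z :=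
      (hasDerivAt_id Z).add_const C₄
    have h2 := (h1.pow 2).const_mul (C₁ ^ 2)
    simpa using (h2.const_add (C₂ ^ 2))
  exact this.deriv

lemma deriv2_fZ1 (C₁ C₂ C₄ : ℝ) :
    deriv (deriv (fun Z : ℝ => C₂ ^ 2 + C₁ ^ 2 * (Z + C₄) ^ 2))
      = fun _ : ℝ => 2 * C₁ ^ 2 := by
  rw [deriv_fZ1]
  funext Z
  have : HasDerivAt (fun Z : ℝ => C₁ ^ 2 * (2 * (Z + C₄))) (2 * C₁ ^ 2) Z := by
    have h1 : HasDerivAt (fun Z : ℝ => Z + C₄) 1 Z :=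
      (hasDerivAt_id Z).add_const C₄
    have := ((h1.const_mul (2:ℝ)).const_mul (C₁ ^ 2))
    simpa [mul_comm] using this
  exact this.deriv

/-- The strain of the Family `Z₁` universal deformations,
`f(Z) = C₂² + C₁²(Z+C₄)²`, `g(Z) = C₂C₃`, `h(Z) = C₃²`, satisfies the four Ricci
compatibility equations; moreover `f > 0` and `f h − g² = C₁²C₃²(Z+C₄)² ≥ 0` under the
stated nondegeneracy conditions. -/
theorem familyZ1_strain_satisfies_compatibility
    (C₁ C₂ C₃ C₄ : ℝ) (f g h : ℝ → ℝ)
    (hf : f = fun Z => C₂ ^ 2 + C₁ ^ 2 * (Z + C₄) ^ 2)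
    (hg : g = fun _ => C₂ * C₃)
    (hh : h = fun _ => C₃ ^ 2) :
    (∀ Z, 2 * f Z * h Z * deriv (deriv f) Z + f Z * deriv f Z * deriv h Z
      - 2 * f Z * (deriv g Z) ^ 2 - 2 * g Z ^ 2 * deriv (deriv f) Z
      + 2 * g Z * deriv f Z * deriv g Z - h Z * (deriv f Z) ^ 2 = 0) ∧
    (∀ Z, 2 * h Z * (deriv g Z) ^ 2 - h Z * deriv f Z * deriv h Z
      - 2 * g Z * deriv g Z * deriv h Z + f Z * (deriv h Z) ^ 2
      + 2 * g Z ^ 2 * deriv (deriv h) Z - 2 * f Z * h Z * deriv (deriv h) Z = 0) ∧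
    (∀ Z, h Z * deriv f Z * deriv g Z - 2 * g Z * deriv f Z * deriv h Z
      + f Z * deriv g Z * deriv h Z + 2 * g Z ^ 2 * deriv (deriv g) Z
      - 2 * f Z * h Z * deriv (deriv g) Z = 0) ∧
    (∀ Z, - h Z ^ 2 * (deriv f Z) ^ 2 + 2 * f Z * h Z ^ 2 * deriv (deriv f) Z
      + f Z ^ 2 * (deriv h Z) ^ 2 + 4 * f Z * g Z * deriv g Z * deriv h Z
      - 2 * g Z ^ 2 * (deriv f Z * deriv h Z + f Z * deriv (deriv h) Z + (deriv g Z) ^ 2)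
      - 2 * h Z * (g Z ^ 2 * deriv (deriv f) Z
        + g Z * (-2 * deriv f Z * deriv g Z + 2 * f Z * deriv (deriv g) Z)
        + f Z * ((deriv g Z) ^ 2 - f Z * deriv (deriv h) Z))
      + 4 * g Z ^ 3 * deriv (deriv g) Z = 0) ∧
    (∀ Z, (C₂ ≠ 0 ∨ (C₁ ≠ 0 ∧ Z + C₄ ≠ 0)) → C₃ ≠ 0 → C₁ * C₃ ≠ 0 →
      0 < f Z ∧ f Z * h Z - g Z ^ 2 = C₁ ^ 2 * C₃ ^ 2 * (Z + C₄) ^ 2 ∧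
        0 ≤ C₁ ^ 2 * C₃ ^ 2 * (Z + C₄) ^ 2) := by
  subst hf hg hh
  have df := deriv_fZ1 C₁ C₂ C₄
  have ddf := deriv2_fZ1 C₁ C₂ C₄
  have dg : deriv (fun _ : ℝ => C₂ * C₃) = fun _ => (0:ℝ) := by
    funext Z; simp
  have ddg : deriv (deriv (fun _ : ℝ => C₂ * C₃)) = fun _ => (0:ℝ) := by
    rw [dg]; funext Z; simp
  have dh : deriv (fun _ : ℝ => C₃ ^ 2) = fun _ => (0:ℝ) := by
    funext Z; simp
  have ddh : deriv (deriv (fun _ : ℝ => C₃ ^ 2)) = fun _ => (0:ℝ) := by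
    rw [dh]; funext Z; simp
  refine ⟨?_, ?_, ?_, ?_, ?_⟩
  · intro Z; rw [ddf, df, dg, dh]; ring
  · intro Z; rw [ddh, df, dg, dh]; ring
  · intro Z; rw [ddg, df, dg, dh]; ring
  · intro Z; rw [ddf, ddg, ddh, df, dg, dh]; ring
  · intro Z hnd h3 h13
    simp only
    refine ⟨?_, by ring, by positivity⟩
    rcases hnd with h2 | ⟨h1, hz⟩
    · have : (0:ℝ) < C₂ ^ 2 := by positivity
      nlinarith [sq_nonneg (C₁ * (Z + C₄))]
    · have : (0:ℝ) < C₁ ^ 2 * (Z + C₄) ^ 2 := by positivity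
      nlinarith [sq_nonneg C₂]
end

section
/- Fix real constants C₁ ≠ 0, C₂, C₃ ≠ 0, C₄, C₅ and define φ on the half-space U = {(X, Y, Z) ∈ ℝ³ : X > 0} by φ(X, Y, Z) = (C₁ √(X² + Y²) cos(ψ), C₁ √(X² + Y²) sin(ψ), Z/(C₁² C₃) + C₅), where ψ = C₂ log √(X² + Y²) + C₃ arctan(Y/X) + C₄ (the Family 5 deformation in Cartesian coordinates). Then φ is differentiable on U and at every point of U its Jacobian matrix F satisfies (FᵀF)₃₃ = 1/(C₁⁴ C₃²). Consequently, the fiber-inextensibility constraint C₃₃ = 1 holds if and only if C₃ = 1/C₁² or C₃ = −1/C₁². -/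
open Real Matrix

private lemma family5_aux_diff (C₁ C₂ C₃ C₄ : ℝ) (h : ℝ → ℝ) (hh : Differentiable ℝ h)
    (x y : ℝ) (hx : 0 < x) :
    DifferentiableAt ℝ (fun q : ℝ × ℝ => C₁ * Real.sqrt (q.1^2+q.2^2)
      * h (C₂ * Real.log (Real.sqrt (q.1^2+q.2^2)) + C₃ * Real.arctan (q.2/q.1) + C₄)) (x, y) := by
  have h1 : DifferentiableAt ℝ (fun q : ℝ × ℝ => q.1^2+q.2^2) (x, y) := by fun_prop
  have hpos : (0:ℝ) < x^2 + y^2 := by positivity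
  have h2 : DifferentiableAt ℝ (fun q : ℝ × ℝ => Real.sqrt (q.1^2+q.2^2)) (x, y) :=
    h1.sqrt hpos.ne'
  have hsne : Real.sqrt (x^2+y^2) ≠ 0 := (Real.sqrt_pos.mpr hpos).ne'
  have h3 : DifferentiableAt ℝ (fun q : ℝ × ℝ => Real.log (Real.sqrt (q.1^2+q.2^2))) (x, y) :=
    h2.log hsne
  have hdiv : DifferentiableAt ℝ (fun q : ℝ × ℝ => q.2 / q.1) (x, y) := by
    simp only [div_eq_mul_inv]
    exact differentiableAt_snd.mul (differentiableAt_fst.inv hx.ne')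
  have h4 : DifferentiableAt ℝ (fun q : ℝ × ℝ => Real.arctan (q.2/q.1)) (x, y) :=
    Real.differentiable_arctan.differentiableAt.comp _ hdiv
  exact ((differentiableAt_const C₁).mul h2).mul
    ((hh _).comp _ (((differentiableAt_const C₂).mul h3).add
      ((differentiableAt_const C₃).mul h4) |>.add (differentiableAt_const C₄)))

set_option maxHeartbeats 1000000 in
/-- Family 5 deformations in Cartesian coordinates, on the half-space `X > 0`:
`φ` is differentiable there, the `33` entry of the right Cauchy–Green strain `FᵀF`
equals `1/(C₁⁴C₃²)`, and the fiber-inextensibility constraint `C₃₃ = 1` holds on the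
half-space if and only if `C₃ = ±1/C₁²`. -/
theorem family5_inextensibility_constraint
    (C₁ C₂ C₃ C₄ C₅ : ℝ) (hC₁ : C₁ ≠ 0) (hC₃ : C₃ ≠ 0)
    (ψ : (Fin 3 → ℝ) → ℝ)
    (hψ : ψ = fun p => C₂ * Real.log (Real.sqrt (p 0 ^ 2 + p 1 ^ 2))
      + C₃ * Real.arctan (p 1 / p 0) + C₄)
    (φ : (Fin 3 → ℝ) → (Fin 3 → ℝ))
    (hφ : φ = fun p => ![C₁ * Real.sqrt (p 0 ^ 2 + p 1 ^ 2) * Real.cos (ψ p),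
      C₁ * Real.sqrt (p 0 ^ 2 + p 1 ^ 2) * Real.sin (ψ p),
      p 2 / (C₁ ^ 2 * C₃) + C₅]) :
    (∀ p : Fin 3 → ℝ, 0 < p 0 →
      DifferentiableAt ℝ φ p ∧
        ((jacobian φ p)ᵀ * jacobian φ p) 2 2 = 1 / (C₁ ^ 4 * C₃ ^ 2)) ∧
    ((∀ p : Fin 3 → ℝ, 0 < p 0 → ((jacobian φ p)ᵀ * jacobian φ p) 2 2 = 1) ↔
      (C₃ = 1 / C₁ ^ 2 ∨ C₃ = -(1 / C₁ ^ 2))) := by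
  subst hψ hφ
  set c : ℝ := C₁ ^ 2 * C₃ with hc
  have hcne : c ≠ 0 := mul_ne_zero (pow_ne_zero 2 hC₁) hC₃
  -- the linear projection onto the first two coordinates
  set L : (Fin 3 → ℝ) →L[ℝ] ℝ × ℝ :=
    (ContinuousLinearMap.proj 0).prod (ContinuousLinearMap.proj 1) with hL
  have key : ∀ p : Fin 3 → ℝ, 0 < p 0 →
      DifferentiableAt ℝ (fun p : Fin 3 → ℝ =>
          ![C₁ * Real.sqrt (p 0 ^ 2 + p 1 ^ 2) *
              Real.cos (C₂ * Real.log (Real.sqrt (p 0 ^ 2 + p 1 ^ 2))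
                + C₃ * Real.arctan (p 1 / p 0) + C₄),
            C₁ * Real.sqrt (p 0 ^ 2 + p 1 ^ 2) *
              Real.sin (C₂ * Real.log (Real.sqrt (p 0 ^ 2 + p 1 ^ 2))
                + C₃ * Real.arctan (p 1 / p 0) + C₄),
            p 2 / c + C₅]) p ∧
      ((jacobian (fun p : Fin 3 → ℝ =>
          ![C₁ * Real.sqrt (p 0 ^ 2 + p 1 ^ 2) *
              Real.cos (C₂ * Real.log (Real.sqrt (p 0 ^ 2 + p 1 ^ 2))
                + C₃ * Real.arctan (p 1 / p 0) + C₄),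
            C₁ * Real.sqrt (p 0 ^ 2 + p 1 ^ 2) *
              Real.sin (C₂ * Real.log (Real.sqrt (p 0 ^ 2 + p 1 ^ 2))
                + C₃ * Real.arctan (p 1 / p 0) + C₄),
            p 2 / c + C₅]) p)ᵀ *
        jacobian (fun p : Fin 3 → ℝ =>
          ![C₁ * Real.sqrt (p 0 ^ 2 + p 1 ^ 2) *
              Real.cos (C₂ * Real.log (Real.sqrt (p 0 ^ 2 + p 1 ^ 2))
                + C₃ * Real.arctan (p 1 / p 0) + C₄),
            C₁ * Real.sqrt (p 0 ^ 2 + p 1 ^ 2) *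
              Real.sin (C₂ * Real.log (Real.sqrt (p 0 ^ 2 + p 1 ^ 2))
                + C₃ * Real.arctan (p 1 / p 0) + C₄),
            p 2 / c + C₅]) p) 2 2 = 1 / (C₁ ^ 4 * C₃ ^ 2) := by
    intro p hp
    -- derivatives of the three components
    have hg0 := family5_aux_diff C₁ C₂ C₃ C₄ Real.cos Real.differentiable_cos (p 0) (p 1) hp
    have hg1 := family5_aux_diff C₁ C₂ C₃ C₄ Real.sin Real.differentiable_sin (p 0) (p 1) hp
    have h0 : HasFDerivAt (fun x : Fin 3 → ℝ =>
        C₁ * Real.sqrt (x 0 ^ 2 + x 1 ^ 2) *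
          Real.cos (C₂ * Real.log (Real.sqrt (x 0 ^ 2 + x 1 ^ 2))
            + C₃ * Real.arctan (x 1 / x 0) + C₄))
        ((fderiv ℝ (fun q : ℝ × ℝ => C₁ * Real.sqrt (q.1^2+q.2^2)
          * Real.cos (C₂ * Real.log (Real.sqrt (q.1^2+q.2^2)) + C₃ * Real.arctan (q.2/q.1) + C₄))
          (L p)).comp L) p := by
      have hcomp := (hg0.hasFDerivAt).comp p L.hasFDerivAt
      have heq : ((fun q : ℝ × ℝ => C₁ * Real.sqrt (q.1^2+q.2^2)
          * Real.cos (C₂ * Real.log (Real.sqrt (q.1^2+q.2^2)) + C₃ * Real.arctan (q.2/q.1) + C₄))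
          ∘ L) = (fun x : Fin 3 → ℝ =>
        C₁ * Real.sqrt (x 0 ^ 2 + x 1 ^ 2) *
          Real.cos (C₂ * Real.log (Real.sqrt (x 0 ^ 2 + x 1 ^ 2))
            + C₃ * Real.arctan (x 1 / x 0) + C₄)) := by
        funext x
        simp [hL, Function.comp]
      rwa [heq] at hcomp
    have h1 : HasFDerivAt (fun x : Fin 3 → ℝ =>
        C₁ * Real.sqrt (x 0 ^ 2 + x 1 ^ 2) *
          Real.sin (C₂ * Real.log (Real.sqrt (x 0 ^ 2 + x 1 ^ 2))
            + C₃ * Real.arctan (x 1 / x 0) + C₄))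
        ((fderiv ℝ (fun q : ℝ × ℝ => C₁ * Real.sqrt (q.1^2+q.2^2)
          * Real.sin (C₂ * Real.log (Real.sqrt (q.1^2+q.2^2)) + C₃ * Real.arctan (q.2/q.1) + C₄))
          (L p)).comp L) p := by
      have hcomp := (hg1.hasFDerivAt).comp p L.hasFDerivAt
      have heq : ((fun q : ℝ × ℝ => C₁ * Real.sqrt (q.1^2+q.2^2)
          * Real.sin (C₂ * Real.log (Real.sqrt (q.1^2+q.2^2)) + C₃ * Real.arctan (q.2/q.1) + C₄))
          ∘ L) = (fun x : Fin 3 → ℝ =>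
        C₁ * Real.sqrt (x 0 ^ 2 + x 1 ^ 2) *
          Real.sin (C₂ * Real.log (Real.sqrt (x 0 ^ 2 + x 1 ^ 2))
            + C₃ * Real.arctan (x 1 / x 0) + C₄)) := by
        funext x
        simp [hL, Function.comp]
      rwa [heq] at hcomp
    have h2 : HasFDerivAt (fun x : Fin 3 → ℝ => x 2 / c + C₅)
        (c⁻¹ • (ContinuousLinearMap.proj 2 : (Fin 3 → ℝ) →L[ℝ] ℝ)) p := by
      simp only [div_eq_inv_mul]
      exact ((hasFDerivAt_apply 2 p).const_mul c⁻¹).add_const C₅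
    -- the total derivative
    set D : Fin 3 → ((Fin 3 → ℝ) →L[ℝ] ℝ) :=
      ![(fderiv ℝ (fun q : ℝ × ℝ => C₁ * Real.sqrt (q.1^2+q.2^2)
          * Real.cos (C₂ * Real.log (Real.sqrt (q.1^2+q.2^2)) + C₃ * Real.arctan (q.2/q.1) + C₄))
          (L p)).comp L,
        (fderiv ℝ (fun q : ℝ × ℝ => C₁ * Real.sqrt (q.1^2+q.2^2)
          * Real.sin (C₂ * Real.log (Real.sqrt (q.1^2+q.2^2)) + C₃ * Real.arctan (q.2/q.1) + C₄))
          (L p)).comp L,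
        c⁻¹ • (ContinuousLinearMap.proj 2 : (Fin 3 → ℝ) →L[ℝ] ℝ)] with hD
    have hF : HasFDerivAt (fun p : Fin 3 → ℝ =>
        ![C₁ * Real.sqrt (p 0 ^ 2 + p 1 ^ 2) *
            Real.cos (C₂ * Real.log (Real.sqrt (p 0 ^ 2 + p 1 ^ 2))
              + C₃ * Real.arctan (p 1 / p 0) + C₄),
          C₁ * Real.sqrt (p 0 ^ 2 + p 1 ^ 2) *
            Real.sin (C₂ * Real.log (Real.sqrt (p 0 ^ 2 + p 1 ^ 2))
              + C₃ * Real.arctan (p 1 / p 0) + C₄),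
          p 2 / c + C₅]) (ContinuousLinearMap.pi D) p := by
      apply hasFDerivAt_pi.mpr
      intro i
      fin_cases i
      · exact h0
      · exact h1
      · exact h2
    have hLsingle : L (Pi.single (2 : Fin 3) (1:ℝ)) = 0 := by
      rw [Prod.ext_iff]
      constructor <;> simp [hL, Pi.single_eq_of_ne]
    refine ⟨hF.differentiableAt, ?_⟩
    have hfd := hF.fderiv
    simp only [jacobian, Matrix.mul_apply, Fin.sum_univ_three, Matrix.transpose_apply,
      Matrix.of_apply, hfd]
    have e0 : ContinuousLinearMap.pi D (Pi.single (2:Fin 3) 1) 0 = 0 := by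
      simp [hD, hLsingle]
    have e1 : ContinuousLinearMap.pi D (Pi.single (2:Fin 3) 1) 1 = 0 := by
      simp [hD, hLsingle]
    have e2 : ContinuousLinearMap.pi D (Pi.single (2:Fin 3) 1) 2 = c⁻¹ := by
      simp [hD]
    rw [e0, e1, e2, hc]
    field_simp
    ring
  constructor
  · exact key
  · constructor
    · intro hall
      have h1 := (key ![1,0,0] (by norm_num)).2
      have h2 := hall ![1,0,0] (by norm_num)
      rw [h1] at h2
      have hsq : (C₁ ^ 2 * C₃) * (C₁ ^ 2 * C₃) = 1 := by
        field_simp at h2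
        linarith [h2]
      rcases mul_self_eq_one_iff.mp hsq with h | h
      · left
        field_simp
        linarith [h]
      · right
        field_simp
        linarith [h]
    · intro hC p hp
      rw [(key p hp).2]
      rcases hC with h | h <;> rw [h] <;> field_simp <;> ring
end

section
/- Fix real constants C₁ ≠ 0, C₂, C₃ ≠ 0, C₄, C₅ and define φ on the half-space U = {(X, Y, Z) ∈ ℝ³ : X > 0} by φ(X, Y, Z) = (C₁ √(X² + Y²) cos(ψ), C₁ √(X² + Y²) sin(ψ), Z/(C₁² C₃) + C₅), where ψ = C₂ log √(X² + Y²) + C₃ arctan(Y/X) + C₄ (the Family 5 deformation in Cartesian coordinates). Then at every point of U the Jacobian matrix F of φ satisfies det F = 1 and trace(FᵀF) = C₁²(1 + C₂²) + C₁² C₃² + 1/(C₁⁴ C₃²). In particular the deformation is isochoric and the first principal invariant I₁ = trace(FᵀF) is constant on U. -/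
set_option maxHeartbeats 1000000


open Real Matrix

/-- Family 5 deformations in Cartesian coordinates, on the half-space `X > 0`:
the deformation is isochoric (`det F = 1`) and the first principal invariant
`I₁ = trace(FᵀF) = C₁²(1 + C₂²) + C₁²C₃² + 1/(C₁⁴C₃²)` is constant there. -/
theorem family5_isochoric_and_constant_I1
    (C₁ C₂ C₃ C₄ C₅ : ℝ) (hC₁ : C₁ ≠ 0) (hC₃ : C₃ ≠ 0)
    (ψ : (Fin 3 → ℝ) → ℝ)
    (hψ : ψ = fun p => C₂ * Real.log (Real.sqrt (p 0 ^ 2 + p 1 ^ 2))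
      + C₃ * Real.arctan (p 1 / p 0) + C₄)
    (φ : (Fin 3 → ℝ) → (Fin 3 → ℝ))
    (hφ : φ = fun p => ![C₁ * Real.sqrt (p 0 ^ 2 + p 1 ^ 2) * Real.cos (ψ p),
      C₁ * Real.sqrt (p 0 ^ 2 + p 1 ^ 2) * Real.sin (ψ p),
      p 2 / (C₁ ^ 2 * C₃) + C₅]) :
    ∀ p : Fin 3 → ℝ, 0 < p 0 →
      (jacobian φ p).det = 1 ∧
        ((jacobian φ p)ᵀ * jacobian φ p).trace =
          C₁ ^ 2 * (1 + C₂ ^ 2) + C₁ ^ 2 * C₃ ^ 2 + 1 / (C₁ ^ 4 * C₃ ^ 2) := by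
  subst hψ hφ
  intro p hx
  set x := p 0 with hxd
  set y := p 1 with hyd
  have hr2 : (0:ℝ) < x ^ 2 + y ^ 2 := by positivity
  set r := Real.sqrt (x ^ 2 + y ^ 2) with hrdef
  have hr : 0 < r := Real.sqrt_pos.2 hr2
  have hrsq : r ^ 2 = x ^ 2 + y ^ 2 := Real.sq_sqrt hr2.le
  have hproj : ∀ i : Fin 3, HasFDerivAt (fun q : Fin 3 → ℝ => q i)
      (ContinuousLinearMap.proj i : (Fin 3 → ℝ) →L[ℝ] ℝ) p :=
    fun i => by exact (ContinuousLinearMap.proj i : (Fin 3 → ℝ) →L[ℝ] ℝ).hasFDerivAt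
  -- derivative of q ↦ q0² + q1²
  have hg : HasFDerivAt (fun q : Fin 3 → ℝ => q 0 ^ 2 + q 1 ^ 2)
      ((2*x) • (ContinuousLinearMap.proj 0 : (Fin 3 → ℝ) →L[ℝ] ℝ)
        + (2*y) • ContinuousLinearMap.proj 1) p := by
    have h := ((hasDerivAt_pow 2 x).comp_hasFDerivAt p (hproj 0)).add
      ((hasDerivAt_pow 2 y).comp_hasFDerivAt p (hproj 1))
    refine h.congr_fderiv ?_; symm
    ext v
    simp [ContinuousLinearMap.smul_apply]
  -- derivative of R = sqrt(q0²+q1²)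
  have hR : HasFDerivAt (fun q : Fin 3 → ℝ => Real.sqrt (q 0 ^ 2 + q 1 ^ 2))
      ((x/r) • (ContinuousLinearMap.proj 0 : (Fin 3 → ℝ) →L[ℝ] ℝ)
        + (y/r) • ContinuousLinearMap.proj 1) p := by
    have h := (Real.hasDerivAt_sqrt hr2.ne').comp_hasFDerivAt p hg
    refine h.congr_fderiv ?_; symm
    ext v
    simp [ContinuousLinearMap.smul_apply]
    rw [← hrdef]
    field_simp
  -- derivative of log ∘ R
  have hlog : HasFDerivAt (fun q : Fin 3 → ℝ => Real.log (Real.sqrt (q 0 ^ 2 + q 1 ^ 2)))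
      ((x/r^2) • (ContinuousLinearMap.proj 0 : (Fin 3 → ℝ) →L[ℝ] ℝ)
        + (y/r^2) • ContinuousLinearMap.proj 1) p := by
    have h := (Real.hasDerivAt_log hr.ne').comp_hasFDerivAt p hR
    refine h.congr_fderiv ?_; symm
    ext v
    simp [ContinuousLinearMap.smul_apply]
    field_simp [hr.ne']
  -- derivative of q ↦ q1 / q0
  have hdiv : HasFDerivAt (fun q : Fin 3 → ℝ => q 1 / q 0)
      ((x⁻¹) • (ContinuousLinearMap.proj 1 : (Fin 3 → ℝ) →L[ℝ] ℝ)
        + (-y/x^2) • ContinuousLinearMap.proj 0) p := by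
    have hinv : HasFDerivAt (fun q : Fin 3 → ℝ => (q 0)⁻¹)
        ((-(x^2)⁻¹) • (ContinuousLinearMap.proj 0 : (Fin 3 → ℝ) →L[ℝ] ℝ)) p :=
      (hasDerivAt_inv hx.ne').comp_hasFDerivAt p (hproj 0)
    have h := (hproj 1).mul hinv
    have heq : (fun q : Fin 3 → ℝ => q 1 / q 0) = fun q => q 1 * (q 0)⁻¹ := by
      funext q; rw [div_eq_mul_inv]
    rw [heq]
    refine h.congr_fderiv ?_; symm
    ext v
    simp [ContinuousLinearMap.smul_apply]
    simp only [← hxd, ← hyd]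
    field_simp [hx.ne']
    ring
  -- derivative of arctan(q1/q0)
  have harctan : HasFDerivAt (fun q : Fin 3 → ℝ => Real.arctan (q 1 / q 0))
      ((-y/r^2) • (ContinuousLinearMap.proj 0 : (Fin 3 → ℝ) →L[ℝ] ℝ)
        + (x/r^2) • ContinuousLinearMap.proj 1) p := by
    have h := (Real.hasDerivAt_arctan (y/x)).comp_hasFDerivAt p hdiv
    refine h.congr_fderiv ?_; symm
    ext v
    simp [ContinuousLinearMap.smul_apply]
    have h1 : (1:ℝ) + (y/x)^2 = r^2/x^2 := by rw [hrsq]; field_simp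
    rw [h1]
    field_simp [hr.ne', hx.ne']
    ring
  -- derivative of ψ
  have hpsi : HasFDerivAt (fun q : Fin 3 → ℝ =>
      C₂ * Real.log (Real.sqrt (q 0 ^ 2 + q 1 ^ 2)) + C₃ * Real.arctan (q 1 / q 0) + C₄)
      (((C₂*x - C₃*y)/r^2) • (ContinuousLinearMap.proj 0 : (Fin 3 → ℝ) →L[ℝ] ℝ)
        + ((C₂*y + C₃*x)/r^2) • ContinuousLinearMap.proj 1) p := by
    have h := ((hlog.const_mul C₂).add (harctan.const_mul C₃)).add_const C₄
    refine h.congr_fderiv ?_; symm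
    ext v
    simp [ContinuousLinearMap.smul_apply]
    field_simp [hr.ne']
    ring
  set A := C₂ * Real.log r + C₃ * Real.arctan (y/x) + C₄ with hA
  set c := Real.cos A with hc
  set s := Real.sin A with hs
  have hsc : s ^ 2 + c ^ 2 = 1 := Real.sin_sq_add_cos_sq A
  -- derivatives of the three components
  have hf0 : HasFDerivAt (fun q : Fin 3 → ℝ => C₁ * Real.sqrt (q 0 ^ 2 + q 1 ^ 2) *
      Real.cos (C₂ * Real.log (Real.sqrt (q 0 ^ 2 + q 1 ^ 2)) + C₃ * Real.arctan (q 1 / q 0) + C₄))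
      ((C₁*(x*c - (C₂*x - C₃*y)*s)/r) • (ContinuousLinearMap.proj 0 : (Fin 3 → ℝ) →L[ℝ] ℝ)
        + (C₁*(y*c - (C₂*y + C₃*x)*s)/r) • ContinuousLinearMap.proj 1) p := by
    have hcosA : HasDerivAt Real.cos (-s) A := by rw [hs]; exact Real.hasDerivAt_cos A
    have h := (hR.const_mul C₁).mul (hcosA.comp_hasFDerivAt p hpsi)
    refine h.congr_fderiv ?_; symm
    ext v
    simp only [ContinuousLinearMap.add_apply, ContinuousLinearMap.smul_apply,
      ContinuousLinearMap.proj_apply, smul_eq_mul, ← hxd, ← hyd, ← hrdef, ← hA, ← hc, ← hs,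
      Function.comp_apply, ← div_eq_mul_inv]
    field_simp [hr.ne']
    ring
  have hf1 : HasFDerivAt (fun q : Fin 3 → ℝ => C₁ * Real.sqrt (q 0 ^ 2 + q 1 ^ 2) *
      Real.sin (C₂ * Real.log (Real.sqrt (q 0 ^ 2 + q 1 ^ 2)) + C₃ * Real.arctan (q 1 / q 0) + C₄))
      ((C₁*(x*s + (C₂*x - C₃*y)*c)/r) • (ContinuousLinearMap.proj 0 : (Fin 3 → ℝ) →L[ℝ] ℝ)
        + (C₁*(y*s + (C₂*y + C₃*x)*c)/r) • ContinuousLinearMap.proj 1) p := by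
    have hsinA : HasDerivAt Real.sin c A := by rw [hc]; exact Real.hasDerivAt_sin A
    have h := (hR.const_mul C₁).mul (hsinA.comp_hasFDerivAt p hpsi)
    refine h.congr_fderiv ?_; symm
    ext v
    simp only [ContinuousLinearMap.add_apply, ContinuousLinearMap.smul_apply,
      ContinuousLinearMap.proj_apply, smul_eq_mul, ← hxd, ← hyd, ← hrdef, ← hA, ← hc, ← hs,
      Function.comp_apply, ← div_eq_mul_inv]
    field_simp [hr.ne']
    ring
  have hf2 : HasFDerivAt (fun q : Fin 3 → ℝ => q 2 / (C₁ ^ 2 * C₃) + C₅)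
      ((1/(C₁^2*C₃)) • (ContinuousLinearMap.proj 2 : (Fin 3 → ℝ) →L[ℝ] ℝ)) p := by
    have h := (((hproj 2).const_mul (1/(C₁ ^ 2 * C₃))).add_const C₅ :)
    have heq : (fun q : Fin 3 → ℝ => q 2 / (C₁ ^ 2 * C₃) + C₅)
        = fun q => (1/(C₁ ^ 2 * C₃)) * q 2 + C₅ := by
      funext q; rw [div_eq_mul_inv, one_div, inv_mul_eq_div, div_eq_mul_inv, mul_comm]
    rw [heq]
    exact h
  -- assemble the full derivative
  set L : (Fin 3 → ℝ) →L[ℝ] (Fin 3 → ℝ) := ContinuousLinearMap.pi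
    ![(C₁*(x*c - (C₂*x - C₃*y)*s)/r) • ContinuousLinearMap.proj 0
        + (C₁*(y*c - (C₂*y + C₃*x)*s)/r) • ContinuousLinearMap.proj 1,
      (C₁*(x*s + (C₂*x - C₃*y)*c)/r) • ContinuousLinearMap.proj 0
        + (C₁*(y*s + (C₂*y + C₃*x)*c)/r) • ContinuousLinearMap.proj 1,
      (1/(C₁^2*C₃)) • ContinuousLinearMap.proj 2] with hL
  have hfd : fderiv ℝ (fun p : Fin 3 → ℝ => ![C₁ * Real.sqrt (p 0 ^ 2 + p 1 ^ 2) *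
      Real.cos (C₂ * Real.log (Real.sqrt (p 0 ^ 2 + p 1 ^ 2)) + C₃ * Real.arctan (p 1 / p 0) + C₄),
      C₁ * Real.sqrt (p 0 ^ 2 + p 1 ^ 2) *
      Real.sin (C₂ * Real.log (Real.sqrt (p 0 ^ 2 + p 1 ^ 2)) + C₃ * Real.arctan (p 1 / p 0) + C₄),
      p 2 / (C₁ ^ 2 * C₃) + C₅]) p = L := by
    refine HasFDerivAt.fderiv (hasFDerivAt_pi'.2 ?_)
    intro i
    fin_cases i
    · simp only [Matrix.cons_val_zero]
      exact hf0.congr_fderiv (by ext v; rfl)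
    · simp only [Matrix.cons_val_one, Matrix.head_cons]
      exact hf1.congr_fderiv (by ext v; rfl)
    · simp only [Matrix.cons_val_two, Matrix.tail_cons, Matrix.head_cons]
      exact hf2.congr_fderiv (by ext v; rfl)
  have hM : jacobian (fun p : Fin 3 → ℝ => ![C₁ * Real.sqrt (p 0 ^ 2 + p 1 ^ 2) *
      Real.cos (C₂ * Real.log (Real.sqrt (p 0 ^ 2 + p 1 ^ 2)) + C₃ * Real.arctan (p 1 / p 0) + C₄),
      C₁ * Real.sqrt (p 0 ^ 2 + p 1 ^ 2) *
      Real.sin (C₂ * Real.log (Real.sqrt (p 0 ^ 2 + p 1 ^ 2)) + C₃ * Real.arctan (p 1 / p 0) + C₄),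
      p 2 / (C₁ ^ 2 * C₃) + C₅]) p =
      !![C₁*(x*c - (C₂*x - C₃*y)*s)/r, C₁*(y*c - (C₂*y + C₃*x)*s)/r, 0;
         C₁*(x*s + (C₂*x - C₃*y)*c)/r, C₁*(y*s + (C₂*y + C₃*x)*c)/r, 0;
         0, 0, 1/(C₁^2*C₃)] := by
    ext i j
    fin_cases i <;> fin_cases j <;>
      simp [jacobian, hfd, hL, ContinuousLinearMap.smul_apply, Pi.single_apply]
  have key : (x*c - (C₂*x - C₃*y)*s)*(y*s + (C₂*y + C₃*x)*c)
      - (y*c - (C₂*y + C₃*x)*s)*(x*s + (C₂*x - C₃*y)*c) = C₃*r^2 := by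
    calc (x*c - (C₂*x - C₃*y)*s)*(y*s + (C₂*y + C₃*x)*c)
        - (y*c - (C₂*y + C₃*x)*s)*(x*s + (C₂*x - C₃*y)*c)
        = (x*(C₂*y + C₃*x) - y*(C₂*x - C₃*y))*(s^2 + c^2) := by ring
      _ = C₃*r^2 := by rw [hsc, hrsq]; ring
  have key2 : (x*c - (C₂*x - C₃*y)*s)^2 + (x*s + (C₂*x - C₃*y)*c)^2
      + ((y*c - (C₂*y + C₃*x)*s)^2 + (y*s + (C₂*y + C₃*x)*c)^2)
      = (1 + C₂^2 + C₃^2)*r^2 := by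
    calc (x*c - (C₂*x - C₃*y)*s)^2 + (x*s + (C₂*x - C₃*y)*c)^2
      + ((y*c - (C₂*y + C₃*x)*s)^2 + (y*s + (C₂*y + C₃*x)*c)^2)
        = (x^2 + y^2 + (C₂*x - C₃*y)^2 + (C₂*y + C₃*x)^2)*(s^2 + c^2) := by ring
      _ = (1 + C₂^2 + C₃^2)*r^2 := by rw [hsc, hrsq]; ring
  constructor
  · rw [hM, Matrix.det_fin_three]
    simp only [Matrix.cons_val', Matrix.cons_val_zero, Matrix.cons_val_one, Matrix.head_cons,
      Matrix.empty_val', Matrix.cons_val_fin_one, Matrix.head_fin_const, Matrix.of_apply,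
      Matrix.cons_val_two, Matrix.tail_cons, Matrix.head_fin_const]
    field_simp [hr.ne']
    linear_combination C₁^2 * key + (C₃*(1-C₁^2)) * ((x^2+y^2) * hsc - hrsq)
  · rw [hM]
    rw [Matrix.trace_fin_three]
    simp only [Matrix.transpose_apply, Matrix.mul_apply, Fin.sum_univ_three,
      Matrix.cons_val', Matrix.cons_val_zero, Matrix.cons_val_one, Matrix.head_cons,
      Matrix.empty_val', Matrix.cons_val_fin_one, Matrix.of_apply,
      Matrix.cons_val_two, Matrix.tail_cons, Matrix.vecHead]
    field_simp [hr.ne', hC₁, hC₃]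
    linear_combination (C₁^2 * C₁^4 * C₃^2) * key2
end
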